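/- Let Q be a query on a λ-graph G. The propagation Q↓ is an open bisimulation if and only if ⟦n⟧ = ⟦m⟧ for every pair of nodes n, m with n Q m. -/
import Mathlib


/-- Directions for paths in a λ-graph. -/
inductive Dir : Type where
  | left | body | right
deriving DecidableEq

/-- Labels of nodes of a (pre–)λ-graph. -/
inductive NodeLabel (Node Name : Type) : Type where
  | app (l r : Node)
  | abs (body : Node)
  | fvar (name : Name)
  | bvar (binder : Node)

/-- The four kinds of nodes. -/
inductive NodeKind : Type where
  | app | abs | fvar | bvar
deriving DecidableEq

/-- The kind of a node label. -/
def NodeLabel.kind {Node Name : Type} : NodeLabel Node Name → NodeKind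
  | .app _ _ => .app
  | .abs _ => .abs
  | .fvar _ => .fvar
  | .bvar _ => .bvar

/-- Locally nameless λ-terms. -/
inductive Term (Name : Type) : Type where
  | bvar (i : ℕ)
  | fvar (a : Name)
  | app (t s : Term Name)
  | lam (t : Term Name)

/-- Reflexive–symmetric–transitive closure `R*` of a relation. -/
inductive RstClosure {α : Type _} (R : α → α → Prop) : α → α → Prop where
  | base {a b : α} : R a b → RstClosure R a b
  | refl (a : α) : RstClosure R a a
  | symm {a b : α} : RstClosure R a b → RstClosure R b a
  | trans {a b c : α} : RstClosure R a b → RstClosure R b c → RstClosure R a c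

/-- A pre–λ-graph: every node carries a label; the binder of a bound variable node is an
abstraction node; the name of a free variable node uniquely identifies it. -/
structure PreLamGraph (Node Name : Type) : Type where
  label : Node → NodeLabel Node Name
  binder_abs : ∀ n l, label n = .bvar l → ∃ b, label l = .abs b
  fvar_inj : ∀ n m a, label n = .fvar a → label m = .fvar a → n = m

namespace PreLamGraph

variable {Node Name : Type}

/-- `Path G τ n m`: there is a path from `n` to `m` with trace `τ`
(binding edges are never followed). -/
inductive Path (G : PreLamGraph Node Name) : List Dir → Node → Node → Prop where
  | nil (n : Node) : Path G [] n n
  | abs {τ : List Dir} {n m b : Node} :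
      Path G τ n m → G.label m = .abs b → Path G (.body :: τ) n b
  | appL {τ : List Dir} {n m l r : Node} :
      Path G τ n m → G.label m = .app l r → Path G (.left :: τ) n l
  | appR {τ : List Dir} {n m l r : Node} :
      Path G τ n m → G.label m = .app l r → Path G (.right :: τ) n r

/-- `r` is a root: the only path ending at `r` is the empty path from `r` itself. -/
def Root (G : PreLamGraph Node Name) (r : Node) : Prop :=
  ∀ (τ : List Dir) (n : Node), G.Path τ n r → τ = []

/-- `Crosses G τ n p`: the path from `n` with trace `τ` crosses the node `p`. -/
inductive Crosses (G : PreLamGraph Node Name) : List Dir → Node → Node → Prop where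
  | here {τ : List Dir} {n p : Node} : G.Path τ n p → Crosses G τ n p
  | step {d : Dir} {τ : List Dir} {n p m : Node} :
      Crosses G τ n p → G.Path (d :: τ) n m → Crosses G (d :: τ) n p

/-- `m` dominates `n`: every path from a root to `n` crosses `m`. -/
def Dominates (G : PreLamGraph Node Name) (m n : Node) : Prop :=
  ∀ (r : Node) (τ : List Dir), G.Root r → G.Path τ r n → G.Crosses τ r m

/-- Acyclicity: a path from a node to itself must have empty trace. -/
def Acyclic (G : PreLamGraph Node Name) : Prop :=
  ∀ (n : Node) (τ : List Dir), G.Path τ n n → τ = []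

/-- Every bound variable node is dominated by its binder. -/
def Dominated (G : PreLamGraph Node Name) : Prop :=
  ∀ (n l : Node), G.label n = .bvar l → G.Dominates l n

/-- A query relates only root nodes. -/
def IsQuery (G : PreLamGraph Node Name) (Q : Node → Node → Prop) : Prop :=
  ∀ n m, Q n m → G.Root n ∧ G.Root m

/-- A relation is homogeneous if it only relates nodes of the same kind. -/
def Homogeneous (G : PreLamGraph Node Name) (R : Node → Node → Prop) : Prop :=
  ∀ n m, R n m → (G.label n).kind = (G.label m).kind

/-- Closure under the left propagation rule. -/
def ClosedAppL (G : PreLamGraph Node Name) (R : Node → Node → Prop) : Prop :=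
  ∀ n m n1 n2 m1 m2, G.label n = .app n1 n2 → G.label m = .app m1 m2 → R n m → R n1 m1

/-- Closure under the right propagation rule. -/
def ClosedAppR (G : PreLamGraph Node Name) (R : Node → Node → Prop) : Prop :=
  ∀ n m n1 n2 m1 m2, G.label n = .app n1 n2 → G.label m = .app m1 m2 → R n m → R n2 m2

/-- Closure under the body propagation rule. -/
def ClosedAbs (G : PreLamGraph Node Name) (R : Node → Node → Prop) : Prop :=
  ∀ n m n' m', G.label n = .abs n' → G.label m = .abs m' → R n m → R n' m'

/-- Closure under the scoping rule. -/
def ClosedScope (G : PreLamGraph Node Name) (R : Node → Node → Prop) : Prop :=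
  ∀ n m l l', G.label n = .bvar l → G.label m = .bvar l' → R n m → R l l'

/-- Closure under the three propagation rules. -/
def ClosedProp (G : PreLamGraph Node Name) (R : Node → Node → Prop) : Prop :=
  G.ClosedAppL R ∧ G.ClosedAppR R ∧ G.ClosedAbs R

/-- A blind bisimulation is a homogeneous relation closed under the propagation rules. -/
def BlindBisimulation (G : PreLamGraph Node Name) (R : Node → Node → Prop) : Prop :=
  G.Homogeneous R ∧ G.ClosedProp R

/-- A bisimulation is a homogeneous relation closed under the propagation rules
and the scoping rule. -/
def Bisimulation (G : PreLamGraph Node Name) (R : Node → Node → Prop) : Prop :=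
  G.BlindBisimulation R ∧ G.ClosedScope R

/-- A relation is open if whenever it relates two free variable nodes they are equal. -/
def OpenRel (G : PreLamGraph Node Name) (R : Node → Node → Prop) : Prop :=
  ∀ n m a b, G.label n = .fvar a → G.label m = .fvar b → R n m → n = m

/-- A sharing equivalence is an open bisimulation that is also an equivalence relation. -/
def SharingEquivalence (G : PreLamGraph Node Name) (R : Node → Node → Prop) : Prop :=
  G.OpenRel R ∧ G.Bisimulation R ∧ Equivalence R

/-- A blind sharing equivalence is an equivalence relation that is a blind bisimulation. -/
def BlindSharingEquivalence (G : PreLamGraph Node Name) (R : Node → Node → Prop) : Prop :=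
  Equivalence R ∧ G.BlindBisimulation R

/-- The propagation `R↓`: the smallest relation containing `R` and closed under the
propagation rules. -/
inductive Propagation (G : PreLamGraph Node Name) (R : Node → Node → Prop) :
    Node → Node → Prop where
  | base {n m : Node} : R n m → Propagation G R n m
  | appL {n m n1 n2 m1 m2 : Node} :
      Propagation G R n m → G.label n = .app n1 n2 → G.label m = .app m1 m2 →
      Propagation G R n1 m1
  | appR {n m n1 n2 m1 m2 : Node} :
      Propagation G R n m → G.label n = .app n1 n2 → G.label m = .app m1 m2 →
      Propagation G R n2 m2
  | abs {n m n' m' : Node} :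
      Propagation G R n m → G.label n = .abs n' → G.label m = .abs m' →
      Propagation G R n' m'

/-- The spreading `R⇓`: the smallest equivalence relation containing `R` and closed
under the propagation rules. -/
inductive Spreading (G : PreLamGraph Node Name) (R : Node → Node → Prop) :
    Node → Node → Prop where
  | base {n m : Node} : R n m → Spreading G R n m
  | refl (n : Node) : Spreading G R n n
  | symm {n m : Node} : Spreading G R n m → Spreading G R m n
  | trans {n m p : Node} : Spreading G R n m → Spreading G R m p → Spreading G R n p
  | appL {n m n1 n2 m1 m2 : Node} :
      Spreading G R n m → G.label n = .app n1 n2 → G.label m = .app m1 m2 →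
      Spreading G R n1 m1
  | appR {n m n1 n2 m1 m2 : Node} :
      Spreading G R n m → G.label n = .app n1 n2 → G.label m = .app m1 m2 →
      Spreading G R n2 m2
  | abs {n m n' m' : Node} :
      Spreading G R n m → G.label n = .abs n' → G.label m = .abs m' →
      Spreading G R n' m'

/-- `IndexOf G l n τ k`: the de Bruijn index of the abstraction node `l` along the path
from `n` with trace `τ` (which crosses `l`) is `k`. -/
inductive IndexOf (G : PreLamGraph Node Name) (l n : Node) : List Dir → ℕ → Prop where
  | here {τ : List Dir} : G.Path τ n l → IndexOf G l n τ 0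
  | abs {d : Dir} {τ : List Dir} {m b : Node} {k : ℕ} :
      G.Path (d :: τ) n m → G.label m = .abs b → m ≠ l →
      IndexOf G l n τ k → IndexOf G l n (d :: τ) (k + 1)
  | other {d : Dir} {τ : List Dir} {m : Node} {k : ℕ} :
      G.Path (d :: τ) n m → (∀ b, G.label m ≠ .abs b) →
      IndexOf G l n τ k → IndexOf G l n (d :: τ) k

/-- `Readback G r τ t`: the readback of the endpoint of the access path from `r` with
trace `τ` is the locally nameless term `t`. -/
inductive Readback (G : PreLamGraph Node Name) (r : Node) : List Dir → Term Name → Prop where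
  | bvar {τ : List Dir} {n l : Node} {k : ℕ} :
      G.Path τ r n → G.label n = .bvar l → G.IndexOf l r τ k →
      Readback G r τ (.bvar k)
  | fvar {τ : List Dir} {n : Node} {a : Name} :
      G.Path τ r n → G.label n = .fvar a → Readback G r τ (.fvar a)
  | abs {τ : List Dir} {n b : Node} {t : Term Name} :
      G.Path τ r n → G.label n = .abs b → Readback G r (.body :: τ) t →
      Readback G r τ (.lam t)
  | app {τ : List Dir} {n n1 n2 : Node} {t1 t2 : Term Name} :
      G.Path τ r n → G.label n = .app n1 n2 →
      Readback G r (.left :: τ) t1 → Readback G r (.right :: τ) t2 →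
      Readback G r τ (.app t1 t2)

end PreLamGraph

/-- A λ-graph: a finite, acyclic and dominated pre–λ-graph. -/
structure LamGraph (Node Name : Type) extends PreLamGraph Node Name where
  finite : Finite Node
  acyclic : toPreLamGraph.Acyclic
  dominated : toPreLamGraph.Dominated
namespace PreLamGraph

variable {Node Name : Type} {G : PreLamGraph Node Name}

lemma path_det {τ : List Dir} {n a : Node} (h1 : G.Path τ n a) :
    ∀ {b : Node}, G.Path τ n b → a = b := by
  induction h1 with
  | nil n => intro b h2; cases h2; rfl
  | abs hp hl ih =>
    intro b h2
    cases h2 with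
    | abs hp' hl' =>
      obtain rfl := ih hp'
      rw [hl] at hl'
      injection hl'
  | appL hp hl ih =>
    intro b h2
    cases h2 with
    | appL hp' hl' =>
      obtain rfl := ih hp'
      rw [hl] at hl'
      injection hl' with h _
  | appR hp hl ih =>
    intro b h2
    cases h2 with
    | appR hp' hl' =>
      obtain rfl := ih hp'
      rw [hl] at hl'
      injection hl' with _ h

lemma path_comp {σ : List Dir} {n p : Node} (h1 : G.Path σ n p) :
    ∀ {δ : List Dir} {m : Node}, G.Path δ p m → G.Path (δ ++ σ) n m := by
  intro δ m h2
  revert h1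
  induction h2 with
  | nil q => intro h1; simpa using h1
  | abs hp hl ih => intro h1; exact .abs (ih h1) hl
  | appL hp hl ih => intro h1; exact .appL (ih h1) hl
  | appR hp hl ih => intro h1; exact .appR (ih h1) hl

lemma path_decomp {σ : List Dir} {n : Node} :
    ∀ {δ : List Dir} {m : Node}, G.Path (δ ++ σ) n m →
      ∃ p, G.Path σ n p ∧ G.Path δ p m := by
  intro δ
  induction δ with
  | nil => intro m h; exact ⟨m, h, .nil m⟩
  | cons d δ ih =>
    intro m h
    simp only [List.cons_append] at h
    cases h with
    | abs hp hl => obtain ⟨p, h1, h2⟩ := ih hp; exact ⟨p, h1, .abs h2 hl⟩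
    | appL hp hl => obtain ⟨p, h1, h2⟩ := ih hp; exact ⟨p, h1, .appL h2 hl⟩
    | appR hp hl => obtain ⟨p, h1, h2⟩ := ih hp; exact ⟨p, h1, .appR h2 hl⟩

lemma suffix_path_unique (hacyc : G.Acyclic) {σ τ : List Dir} {n a : Node}
    (h1 : G.Path σ n a) (h2 : G.Path τ n a) (hs : σ <:+ τ) : σ = τ := by
  obtain ⟨δ, rfl⟩ := hs
  obtain ⟨p, hp1, hp2⟩ := path_decomp h2
  obtain rfl := path_det hp1 h1
  have hδ := hacyc _ _ hp2
  subst hδ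
  simp

lemma kind_abs {x : NodeLabel Node Name} (h : x.kind = .abs) : ∃ b, x = .abs b := by
  cases x with
  | abs b => exact ⟨b, rfl⟩
  | app a b => simp [NodeLabel.kind] at h
  | fvar a => simp [NodeLabel.kind] at h
  | bvar l => simp [NodeLabel.kind] at h

lemma kind_app {x : NodeLabel Node Name} (h : x.kind = .app) : ∃ a b, x = .app a b := by
  cases x with
  | app a b => exact ⟨a, b, rfl⟩
  | abs b => simp [NodeLabel.kind] at h
  | fvar a => simp [NodeLabel.kind] at h
  | bvar l => simp [NodeLabel.kind] at h

lemma prop_to_paths {Q : Node → Node → Prop} {n m : Node}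
    (h : Propagation G Q n m) :
    ∃ r r' τ, Q r r' ∧ G.Path τ r n ∧ G.Path τ r' m := by
  induction h with
  | base hq => exact ⟨_, _, [], hq, .nil _, .nil _⟩
  | appL h hn hm ih =>
    obtain ⟨r, r', τ, hq, h1, h2⟩ := ih
    exact ⟨r, r', .left :: τ, hq, .appL h1 hn, .appL h2 hm⟩
  | appR h hn hm ih =>
    obtain ⟨r, r', τ, hq, h1, h2⟩ := ih
    exact ⟨r, r', .right :: τ, hq, .appR h1 hn, .appR h2 hm⟩
  | abs h hn hm ih =>
    obtain ⟨r, r', τ, hq, h1, h2⟩ := ih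
    exact ⟨r, r', .body :: τ, hq, .abs h1 hn, .abs h2 hm⟩

lemma prop_desc {Q : Node → Node → Prop} {a b : Node} :
    ∀ {τ : List Dir} {n : Node}, G.Path τ a n → ∀ {m : Node}, G.Path τ b m →
      Propagation G Q a b → Propagation G Q n m := by
  intro τ n h1
  induction h1 with
  | nil n => intro m h2 h; cases h2; exact h
  | abs hp hl ih =>
    intro m h2 h
    cases h2 with
    | abs hp' hl' => exact .abs (ih hp' h) hl hl'
  | appL hp hl ih =>
    intro m h2 h
    cases h2 with
    | appL hp' hl' => exact .appL (ih hp' h) hl hl'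
  | appR hp hl ih =>
    intro m h2 h
    cases h2 with
    | appR hp' hl' => exact .appR (ih hp' h) hl hl'

section Descend

variable {R : Node → Node → Prop} (hhom : G.Homogeneous R) (hL : G.ClosedAppL R)
  (hRr : G.ClosedAppR R) (hA : G.ClosedAbs R)

include hhom hL hRr hA

lemma descend_right {a b : Node} :
    ∀ {δ : List Dir} {y : Node}, G.Path δ b y → R a b → ∃ x, G.Path δ a x ∧ R x y := by
  intro δ y h
  induction h with
  | nil n => intro hr; exact ⟨a, .nil a, hr⟩
  | abs hp hl ih =>
    intro hr
    obtain ⟨x, hx, hxw⟩ := ih hr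
    have hk := hhom _ _ hxw
    rw [hl] at hk
    obtain ⟨x', hlx⟩ := kind_abs hk
    exact ⟨x', .abs hx hlx, hA _ _ _ _ hlx hl hxw⟩
  | appL hp hl ih =>
    intro hr
    obtain ⟨x, hx, hxw⟩ := ih hr
    have hk := hhom _ _ hxw
    rw [hl] at hk
    obtain ⟨x1, x2, hlx⟩ := kind_app hk
    exact ⟨x1, .appL hx hlx, hL _ _ _ _ _ _ hlx hl hxw⟩
  | appR hp hl ih =>
    intro hr
    obtain ⟨x, hx, hxw⟩ := ih hr
    have hk := hhom _ _ hxw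
    rw [hl] at hk
    obtain ⟨x1, x2, hlx⟩ := kind_app hk
    exact ⟨x2, .appR hx hlx, hRr _ _ _ _ _ _ hlx hl hxw⟩

lemma descend_left {a b : Node} :
    ∀ {δ : List Dir} {x : Node}, G.Path δ a x → R a b → ∃ y, G.Path δ b y ∧ R x y := by
  intro δ x h
  induction h with
  | nil n => intro hr; exact ⟨b, .nil b, hr⟩
  | abs hp hl ih =>
    intro hr
    obtain ⟨y, hy, hwy⟩ := ih hr
    have hk := hhom _ _ hwy
    rw [hl] at hk
    obtain ⟨y', hly⟩ := kind_abs hk.symm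
    exact ⟨y', .abs hy hly, hA _ _ _ _ hl hly hwy⟩
  | appL hp hl ih =>
    intro hr
    obtain ⟨y, hy, hwy⟩ := ih hr
    have hk := hhom _ _ hwy
    rw [hl] at hk
    obtain ⟨y1, y2, hly⟩ := kind_app hk.symm
    exact ⟨y1, .appL hy hly, hL _ _ _ _ _ _ hl hly hwy⟩
  | appR hp hl ih =>
    intro hr
    obtain ⟨y, hy, hwy⟩ := ih hr
    have hk := hhom _ _ hwy
    rw [hl] at hk
    obtain ⟨y1, y2, hly⟩ := kind_app hk.symm
    exact ⟨y2, .appR hy hly, hRr _ _ _ _ _ _ hl hly hwy⟩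

end Descend

lemma no_chain [Finite Node] (hacyc : G.Acyclic) {σ : List Dir} (hσ : σ ≠ [])
    (S : Node → Prop) (hstep : ∀ x, S x → ∃ y, S y ∧ G.Path σ x y)
    {x₀ : Node} (hx₀ : S x₀) : False := by
  have hstep' : ∀ x : {x // S x}, ∃ y : {x // S x}, G.Path σ x.1 y.1 := by
    rintro ⟨x, hx⟩
    obtain ⟨y, hy, hp⟩ := hstep x hx
    exact ⟨⟨y, hy⟩, hp⟩
  choose nxt hnxt using hstep'
  let f : ℕ → {x // S x} := fun n => Nat.rec ⟨x₀, hx₀⟩ (fun _ p => nxt p) n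
  have hf : ∀ n, G.Path σ (f n).1 (f (n + 1)).1 := fun n => hnxt (f n)
  have key : ∀ k n, ∃ π : List Dir, π.length = k * σ.length ∧ G.Path π (f n).1 (f (n + k)).1 := by
    intro k
    induction k with
    | zero => intro n; exact ⟨[], by simp, .nil _⟩
    | succ k ih =>
      intro n
      obtain ⟨π, hlen, hπ⟩ := ih (n + 1)
      have hc := path_comp (hf n) hπ
      rw [show n + 1 + k = n + (k + 1) by omega] at hc
      exact ⟨π ++ σ, by simp [hlen, Nat.succ_mul], hc⟩
  obtain ⟨i, j, hne, heq⟩ := Finite.exists_ne_map_eq_of_infinite (fun n => (f n).1)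
  have main : ∀ i j : ℕ, i < j → (f i).1 = (f j).1 → False := by
    intro i j hij he
    obtain ⟨π, hlen, hπ⟩ := key (j - i) i
    rw [show i + (j - i) = j by omega, ← he] at hπ
    have h0 := hacyc _ _ hπ
    subst h0
    simp only [List.length_nil] at hlen
    rcases Nat.mul_eq_zero.mp hlen.symm with h | h
    · omega
    · exact hσ (List.length_eq_zero_iff.mp h)
  rcases hne.lt_or_gt with h | h
  · exact main _ _ h heq
  · exact main _ _ h heq.symm

lemma triple_false [Finite Node] {R : Node → Node → Prop}
    (hhom : G.Homogeneous R) (hL : G.ClosedAppL R) (hRr : G.ClosedAppR R)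
    (hA : G.ClosedAbs R) (hacyc : G.Acyclic) {σ : List Dir} (hσ : σ ≠ [])
    {a b c : Node} (h1 : R a b) (h2 : R a c) (h3 : G.Path σ b c) : False := by
  refine no_chain hacyc hσ (fun x => ∃ b c, R x b ∧ R x c ∧ G.Path σ b c) ?_
    (x₀ := a) ⟨b, c, h1, h2, h3⟩
  rintro x ⟨b, c, hxb, hxc, hbc⟩
  obtain ⟨x', hpath, hx'c⟩ := descend_right hhom hL hRr hA hbc hxb
  obtain ⟨c', hcc', hx'c'⟩ := descend_left hhom hL hRr hA hpath hxc
  exact ⟨x', ⟨c, c', hx'c, hx'c', hcc'⟩, hpath⟩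

lemma indexOf_crossing {l r : Node} :
    ∀ {τ : List Dir} {k : ℕ}, IndexOf G l r τ k → ∃ σ, σ <:+ τ ∧ G.Path σ r l := by
  intro τ k h
  induction h with
  | here h => exact ⟨_, List.suffix_refl _, h⟩
  | abs hp hlm hne hsub ih =>
    obtain ⟨σ, hs, hσ⟩ := ih
    exact ⟨σ, hs.trans (List.suffix_cons _ _), hσ⟩
  | other hp hnabs hsub ih =>
    obtain ⟨σ, hs, hσ⟩ := ih
    exact ⟨σ, hs.trans (List.suffix_cons _ _), hσ⟩

lemma indexOf_exists {l r : Node} :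
    ∀ {τ : List Dir}, G.Crosses τ r l → (∃ b, G.label l = .abs b) →
      ∃ k, IndexOf G l r τ k := by
  intro τ h
  induction h with
  | here h => intro _; exact ⟨0, .here h⟩
  | @step d τ' n p m hc hp ih =>
    intro hl
    obtain ⟨k, hk⟩ := ih hl
    by_cases hml : m = p
    · subst hml; exact ⟨0, .here hp⟩
    · cases hlm : G.label m with
      | abs b => exact ⟨k + 1, .abs hp hlm hml hk⟩
      | app a b => exact ⟨k, .other hp (fun b h => by rw [hlm] at h; cases h) hk⟩
      | fvar a => exact ⟨k, .other hp (fun b h => by rw [hlm] at h; cases h) hk⟩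
      | bvar b => exact ⟨k, .other hp (fun b h => by rw [hlm] at h; cases h) hk⟩

lemma suffix_comparable {α : Type _} :
    ∀ {l₃ l₁ l₂ : List α}, l₁ <:+ l₃ → l₂ <:+ l₃ → l₁ <:+ l₂ ∨ l₂ <:+ l₁ := by
  intro l₃
  induction l₃ with
  | nil =>
    intro l₁ l₂ h1 h2
    left
    simp [List.suffix_nil.mp h1, List.suffix_nil.mp h2]
  | cons a l₃ ih =>
    intro l₁ l₂ h1 h2
    rcases List.suffix_cons_iff.mp h1 with rfl | h1'
    · exact Or.inr h2
    · rcases List.suffix_cons_iff.mp h2 with rfl | h2'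
      · exact Or.inl (h1'.trans (List.suffix_cons a l₃))
      · exact ih h1' h2'

lemma index_unique (hacyc : G.Acyclic) {r r' l l' bl bl' : Node}
    (hpar : ∀ (σ : List Dir) (p p' : Node), G.Path σ r p → G.Path σ r' p' →
      (G.label p).kind = (G.label p').kind)
    (hl : G.label l = .abs bl) (hl' : G.label l' = .abs bl') :
    ∀ {τ : List Dir} {k : ℕ}, IndexOf G l r τ k → ∀ {k' : ℕ}, IndexOf G l' r' τ k' →
      ∀ {σ : List Dir}, G.Path σ r l → G.Path σ r' l' → σ <:+ τ → k = k' := by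
  intro τ k h1
  induction h1 with
  | here h =>
    intro k' h2 σ hσ1 hσ2 hsfx
    obtain rfl := suffix_path_unique hacyc hσ1 h hsfx
    cases h2 with
    | here _ => rfl
    | abs hp' hlm' hne' _ => exact absurd (path_det hp' hσ2) hne'
    | other hp' hnabs' _ =>
      obtain rfl := path_det hp' hσ2
      exact absurd hl' (hnabs' bl')
  | @abs d τ₀ m b k hp hlm hne hsub ih =>
    intro k' h2 σ hσ1 hσ2 hsfx
    have hsfx0 : σ <:+ τ₀ := by
      rcases List.suffix_cons_iff.mp hsfx with rfl | h
      · exact absurd (path_det hp hσ1) hne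
      · exact h
    cases h2 with
    | here h' =>
      obtain rfl := suffix_path_unique hacyc hσ2 h' hsfx
      exact absurd (path_det hp hσ1) hne
    | abs hp' hlm' hne' hsub' =>
      have := ih hsub' hσ1 hσ2 hsfx0
      omega
    | other hp' hnabs' hsub' =>
      have hk := hpar _ _ _ hp hp'
      rw [hlm] at hk
      obtain ⟨bb, hbb⟩ := kind_abs hk.symm
      exact absurd hbb (hnabs' bb)
  | @other d τ₀ m k hp hnabs hsub ih =>
    intro k' h2 σ hσ1 hσ2 hsfx
    have hsfx0 : σ <:+ τ₀ := by
      rcases List.suffix_cons_iff.mp hsfx with rfl | h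
      · obtain rfl := path_det hp hσ1
        exact absurd hl (hnabs bl)
      · exact h
    cases h2 with
    | here h' =>
      obtain rfl := suffix_path_unique hacyc hσ2 h' hsfx
      obtain rfl := path_det hp hσ1
      exact absurd hl (hnabs bl)
    | abs hp' hlm' hne' hsub' =>
      have hk := hpar _ _ _ hp hp'
      rw [hlm'] at hk
      obtain ⟨bb, hbb⟩ := kind_abs hk
      exact absurd hbb (hnabs bb)
    | other hp' hnabs' hsub' => exact ih hsub' hσ1 hσ2 hsfx0

lemma index_sync {r r' l l' bl bl' : Node}
    (hpar : ∀ (σ : List Dir) (p p' : Node), G.Path σ r p → G.Path σ r' p' →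
      (G.label p).kind = (G.label p').kind)
    (hl : G.label l = .abs bl) (hl' : G.label l' = .abs bl') :
    ∀ {τ : List Dir} {k : ℕ}, IndexOf G l r τ k → IndexOf G l' r' τ k →
      ∃ σ, G.Path σ r l ∧ G.Path σ r' l' := by
  intro τ k h1
  induction h1 with
  | here h =>
    intro h2
    cases h2 with
    | here h' => exact ⟨_, h, h'⟩
    | other hp' hnabs' _ =>
      have hk := hpar _ _ _ h hp'
      rw [hl] at hk
      obtain ⟨bb, hbb⟩ := kind_abs hk.symm
      exact absurd hbb (hnabs' bb)
  | abs hp hlm hne hsub ih =>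
    intro h2
    cases h2 with
    | abs hp' hlm' hne' hsub' => exact ih hsub'
    | other hp' hnabs' hsub' =>
      have hk := hpar _ _ _ hp hp'
      rw [hlm] at hk
      obtain ⟨bb, hbb⟩ := kind_abs hk.symm
      exact absurd hbb (hnabs' bb)
  | other hp hnabs hsub ih =>
    intro h2
    cases h2 with
    | here h' =>
      have hk := hpar _ _ _ hp h'
      rw [hl'] at hk
      obtain ⟨bb, hbb⟩ := kind_abs hk
      exact absurd hbb (hnabs bb)
    | abs hp' hlm' hne' hsub' =>
      have hk := hpar _ _ _ hp hp'
      rw [hlm'] at hk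
      obtain ⟨bb, hbb⟩ := kind_abs hk
      exact absurd hbb (hnabs bb)
    | other hp' hnabs' hsub' => exact ih hsub'

/-- The node kind corresponding to a term constructor. -/
def termKind {Name : Type} : Term Name → NodeKind
  | .bvar _ => .bvar
  | .fvar _ => .fvar
  | .lam _ => .abs
  | .app _ _ => .app

lemma readback_kind {r p : Node} {τ : List Dir} {s : Term Name}
    (h : Readback G r τ s) (hp : G.Path τ r p) : (G.label p).kind = termKind s := by
  cases h with
  | bvar hq hlb _ => obtain rfl := path_det hq hp; rw [hlb]; rfl
  | fvar hq hlb => obtain rfl := path_det hq hp; rw [hlb]; rfl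
  | abs hq hlb _ => obtain rfl := path_det hq hp; rw [hlb]; rfl
  | app hq hlb _ _ => obtain rfl := path_det hq hp; rw [hlb]; rfl

lemma readback_fvar {r p : Node} {τ : List Dir} {s : Term Name} {a : Name}
    (h : Readback G r τ s) (hp : G.Path τ r p) (hl : G.label p = .fvar a) :
    s = .fvar a := by
  cases h with
  | bvar hq hlb _ => obtain rfl := path_det hq hp; rw [hl] at hlb; cases hlb
  | fvar hq hlb =>
    obtain rfl := path_det hq hp
    rw [hl] at hlb
    injection hlb with h
    rw [h]
  | abs hq hlb _ => obtain rfl := path_det hq hp; rw [hl] at hlb; cases hlb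
  | app hq hlb _ _ => obtain rfl := path_det hq hp; rw [hl] at hlb; cases hlb

lemma readback_bvar {r p l : Node} {τ : List Dir} {s : Term Name}
    (h : Readback G r τ s) (hp : G.Path τ r p) (hl : G.label p = .bvar l) :
    ∃ k, s = .bvar k ∧ IndexOf G l r τ k := by
  cases h with
  | bvar hq hlb hidx =>
    obtain rfl := path_det hq hp
    rw [hl] at hlb
    injection hlb with h
    subst h
    exact ⟨_, rfl, hidx⟩
  | fvar hq hlb => obtain rfl := path_det hq hp; rw [hl] at hlb; cases hlb
  | abs hq hlb _ => obtain rfl := path_det hq hp; rw [hl] at hlb; cases hlb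
  | app hq hlb _ _ => obtain rfl := path_det hq hp; rw [hl] at hlb; cases hlb

lemma common_readback {r r' : Node} {t : Term Name}
    (ht : Readback G r [] t) (ht' : Readback G r' [] t) :
    ∀ {τ : List Dir} {p : Node}, G.Path τ r p → ∀ {p' : Node}, G.Path τ r' p' →
      ∃ s, Readback G r τ s ∧ Readback G r' τ s := by
  intro τ p h1
  revert ht
  induction h1 with
  | nil n => intro ht p' h2; exact ⟨t, ht, ht'⟩
  | abs hp hl ih =>
    intro ht p' h2
    cases h2 with
    | abs hp' hl' =>
      obtain ⟨s, hs1, hs2⟩ := ih ht hp'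
      cases hs1 with
      | bvar hq hlb _ => obtain rfl := path_det hq hp; rw [hl] at hlb; cases hlb
      | fvar hq hlb => obtain rfl := path_det hq hp; rw [hl] at hlb; cases hlb
      | app hq hlb _ _ => obtain rfl := path_det hq hp; rw [hl] at hlb; cases hlb
      | abs hq hlb hbody =>
        cases hs2 with
        | abs hq' hlb' hbody' => exact ⟨_, hbody, hbody'⟩
  | appL hp hl ih =>
    intro ht p' h2
    cases h2 with
    | appL hp' hl' =>
      obtain ⟨s, hs1, hs2⟩ := ih ht hp'
      cases hs1 with
      | bvar hq hlb _ => obtain rfl := path_det hq hp; rw [hl] at hlb; cases hlb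
      | fvar hq hlb => obtain rfl := path_det hq hp; rw [hl] at hlb; cases hlb
      | abs hq hlb _ => obtain rfl := path_det hq hp; rw [hl] at hlb; cases hlb
      | app hq hlb hleft hright =>
        cases hs2 with
        | app hq' hlb' hleft' hright' => exact ⟨_, hleft, hleft'⟩
  | appR hp hl ih =>
    intro ht p' h2
    cases h2 with
    | appR hp' hl' =>
      obtain ⟨s, hs1, hs2⟩ := ih ht hp'
      cases hs1 with
      | bvar hq hlb _ => obtain rfl := path_det hq hp; rw [hl] at hlb; cases hlb
      | fvar hq hlb => obtain rfl := path_det hq hp; rw [hl] at hlb; cases hlb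
      | abs hq hlb _ => obtain rfl := path_det hq hp; rw [hl] at hlb; cases hlb
      | app hq hlb hleft hright =>
        cases hs2 with
        | app hq' hlb' hleft' hright' => exact ⟨_, hright, hright'⟩

lemma readback_exists [Finite Node] (hacyc : G.Acyclic) (hdom : G.Dominated)
    {r : Node} (hr : G.Root r) :
    ∀ {τ : List Dir} {n : Node}, G.Path τ r n → ∃ t, Readback G r τ t := by
  have htp : ∀ {a b : Node}, Relation.TransGen (fun x y => ∃ d, G.Path [d] x y) a b →
      ∃ π, π ≠ [] ∧ G.Path π a b := by
    intro a b h
    induction h with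
    | single h => obtain ⟨d, hd⟩ := h; exact ⟨[d], by simp, hd⟩
    | tail h hstep ih =>
      obtain ⟨π, hne, hπ⟩ := ih
      obtain ⟨d, hd⟩ := hstep
      exact ⟨[d] ++ π, by simp, path_comp hπ hd⟩
  haveI : IsTrans Node (fun a b => Relation.TransGen (fun x y => ∃ d, G.Path [d] x y) b a) :=
    ⟨fun a b c h1 h2 => Relation.TransGen.trans h2 h1⟩
  haveI : IsIrrefl Node (fun a b => Relation.TransGen (fun x y => ∃ d, G.Path [d] x y) b a) :=
    ⟨fun a h => by obtain ⟨π, hne, hπ⟩ := htp h; exact hne (hacyc _ _ hπ)⟩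
  have hwf := Finite.wellFounded_of_trans_of_irrefl
    (fun a b : Node => Relation.TransGen (fun x y => ∃ d, G.Path [d] x y) b a)
  suffices H : ∀ n (τ : List Dir), G.Path τ r n → ∃ t, Readback G r τ t by
    intro τ n h; exact H n τ h
  intro n
  refine hwf.induction (C := fun n => ∀ (τ : List Dir), G.Path τ r n → ∃ t, Readback G r τ t)
    n ?_
  intro x ih τ hτ
  cases hlab : G.label x with
  | fvar a => exact ⟨.fvar a, .fvar hτ hlab⟩
  | bvar l =>
    have hcross := hdom x l hlab r τ hr hτ
    obtain ⟨k, hk⟩ := indexOf_exists hcross (G.binder_abs x l hlab)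
    exact ⟨.bvar k, .bvar hτ hlab hk⟩
  | abs b =>
    obtain ⟨t, ht⟩ := ih b (Relation.TransGen.single ⟨Dir.body, .abs (.nil x) hlab⟩)
      (.body :: τ) (.abs hτ hlab)
    exact ⟨.lam t, .abs hτ hlab ht⟩
  | app n1 n2 =>
    obtain ⟨t1, ht1⟩ := ih n1 (Relation.TransGen.single ⟨Dir.left, .appL (.nil x) hlab⟩)
      (.left :: τ) (.appL hτ hlab)
    obtain ⟨t2, ht2⟩ := ih n2 (Relation.TransGen.single ⟨Dir.right, .appR (.nil x) hlab⟩)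
      (.right :: τ) (.appR hτ hlab)
    exact ⟨.app t1 t2, .app hτ hlab ht1 ht2⟩

lemma readback_eq_of_bisim [Finite Node] (hacyc : G.Acyclic)
    {Q : Node → Node → Prop}
    (hopen : G.OpenRel (Propagation G Q)) (hhom : G.Homogeneous (Propagation G Q))
    (hL : G.ClosedAppL (Propagation G Q)) (hRc : G.ClosedAppR (Propagation G Q))
    (hA : G.ClosedAbs (Propagation G Q)) (hS : G.ClosedScope (Propagation G Q))
    {r r' : Node} (hq : Q r r') :
    ∀ {τ : List Dir} {t : Term Name}, Readback G r τ t →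
      ∀ {t' : Term Name}, Readback G r' τ t' → t = t' := by
  have hpar : ∀ (σ : List Dir) (p p' : Node), G.Path σ r p → G.Path σ r' p' →
      (G.label p).kind = (G.label p').kind :=
    fun σ p p' a b => hhom _ _ (prop_desc a b (.base hq))
  intro τ t h1
  induction h1 with
  | bvar hp hlab hidx =>
    intro t' h2
    cases h2 with
    | fvar hp' hlab' =>
      have hk := hpar _ _ _ hp hp'
      rw [hlab, hlab'] at hk
      simp [NodeLabel.kind] at hk
    | abs hp' hlab' _ =>
      have hk := hpar _ _ _ hp hp'
      rw [hlab, hlab'] at hk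
      simp [NodeLabel.kind] at hk
    | app hp' hlab' _ _ =>
      have hk := hpar _ _ _ hp hp'
      rw [hlab, hlab'] at hk
      simp [NodeLabel.kind] at hk
    | bvar hp' hlab' hidx' =>
      have hRpp := prop_desc hp hp' (Propagation.base hq)
      have hRll := hS _ _ _ _ hlab hlab' hRpp
      obtain ⟨bl, hbl⟩ := G.binder_abs _ _ hlab
      obtain ⟨bl', hbl'⟩ := G.binder_abs _ _ hlab'
      obtain ⟨σ1, hsf1, hσ1⟩ := indexOf_crossing hidx
      obtain ⟨σ2, hsf2, hσ2⟩ := indexOf_crossing hidx'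
      rcases suffix_comparable hsf1 hsf2 with hc | hc
      · by_cases heq : σ1 = σ2
        · subst heq
          rw [index_unique hacyc hpar hbl hbl' hidx hidx' hσ1 hσ2 hsf1]
        · exfalso
          obtain ⟨δ, rfl⟩ := hc
          have hδ : δ ≠ [] := by rintro rfl; exact heq (by simp)
          obtain ⟨δ2, rfl⟩ := hsf2
          obtain ⟨u, hu, -⟩ := path_decomp hp
          obtain ⟨w, hw1, hw2⟩ := path_decomp hu
          obtain rfl := path_det hw1 hσ1
          have hRul' := prop_desc hu hσ2 (Propagation.base hq)
          exact triple_false (R := fun a b => Propagation G Q b a)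
            (fun n m h => (hhom _ _ h).symm)
            (fun n m n1 n2 m1 m2 ha hb h => hL _ _ _ _ _ _ hb ha h)
            (fun n m n1 n2 m1 m2 ha hb h => hRc _ _ _ _ _ _ hb ha h)
            (fun n m n' m' ha hb h => hA _ _ _ _ hb ha h)
            hacyc hδ hRll hRul' hw2
      · by_cases heq : σ2 = σ1
        · subst heq
          rw [index_unique hacyc hpar hbl hbl' hidx hidx' hσ1 hσ2 hsf1]
        · exfalso
          obtain ⟨δ, rfl⟩ := hc
          have hδ : δ ≠ [] := by rintro rfl; exact heq (by simp)
          obtain ⟨δ2, rfl⟩ := hsf1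
          obtain ⟨q', hq', -⟩ := path_decomp hp'
          obtain ⟨w, hw1, hw2⟩ := path_decomp hq'
          obtain rfl := path_det hw1 hσ2
          have hRlq' := prop_desc hσ1 hq' (Propagation.base hq)
          exact triple_false hhom hL hRc hA hacyc hδ hRll hRlq' hw2
  | fvar hp hlab =>
    intro t' h2
    cases h2 with
    | fvar hp' hlab' =>
      have he := hopen _ _ _ _ hlab hlab' (prop_desc hp hp' (.base hq))
      subst he
      rw [hlab] at hlab'
      injection hlab' with h
      rw [h]
    | bvar hp' hlab' _ =>
      have hk := hpar _ _ _ hp hp'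
      rw [hlab, hlab'] at hk
      simp [NodeLabel.kind] at hk
    | abs hp' hlab' _ =>
      have hk := hpar _ _ _ hp hp'
      rw [hlab, hlab'] at hk
      simp [NodeLabel.kind] at hk
    | app hp' hlab' _ _ =>
      have hk := hpar _ _ _ hp hp'
      rw [hlab, hlab'] at hk
      simp [NodeLabel.kind] at hk
  | abs hp hlab hbody ih =>
    intro t' h2
    cases h2 with
    | abs hp' hlab' hbody' => rw [ih hbody']
    | bvar hp' hlab' _ =>
      have hk := hpar _ _ _ hp hp'
      rw [hlab, hlab'] at hk
      simp [NodeLabel.kind] at hk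
    | fvar hp' hlab' =>
      have hk := hpar _ _ _ hp hp'
      rw [hlab, hlab'] at hk
      simp [NodeLabel.kind] at hk
    | app hp' hlab' _ _ =>
      have hk := hpar _ _ _ hp hp'
      rw [hlab, hlab'] at hk
      simp [NodeLabel.kind] at hk
  | app hp hlab hleft hright ihl ihr =>
    intro t' h2
    cases h2 with
    | app hp' hlab' hleft' hright' => rw [ihl hleft', ihr hright']
    | bvar hp' hlab' _ =>
      have hk := hpar _ _ _ hp hp'
      rw [hlab, hlab'] at hk
      simp [NodeLabel.kind] at hk
    | fvar hp' hlab' =>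
      have hk := hpar _ _ _ hp hp'
      rw [hlab, hlab'] at hk
      simp [NodeLabel.kind] at hk
    | abs hp' hlab' _ =>
      have hk := hpar _ _ _ hp hp'
      rw [hlab, hlab'] at hk
      simp [NodeLabel.kind] at hk

end PreLamGraph


open PreLamGraph in
/-- `Q↓` is an open bisimulation iff `⟦n⟧ = ⟦m⟧` for every `n Q m`. -/
theorem propagation_open_bisim_iff_readback_eq {Node Name : Type} (G : LamGraph Node Name)
    (Q : Node → Node → Prop) (hQ : G.toPreLamGraph.IsQuery Q) :
    (G.toPreLamGraph.OpenRel (Propagation G.toPreLamGraph Q) ∧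
      G.toPreLamGraph.Bisimulation (Propagation G.toPreLamGraph Q)) ↔
      ∀ n m, Q n m →
        ∃ t : Term Name, Readback G.toPreLamGraph n [] t ∧
          Readback G.toPreLamGraph m [] t := by
  constructor
  · rintro ⟨hopen, ⟨hhom, hL, hRc, hA⟩, hS⟩ n m hqnm
    haveI := G.finite
    obtain ⟨hrn, hrm⟩ := hQ n m hqnm
    obtain ⟨t1, ht1⟩ := readback_exists G.acyclic G.dominated hrn (Path.nil n)
    obtain ⟨t2, ht2⟩ := readback_exists G.acyclic G.dominated hrm (Path.nil m)
    have he := readback_eq_of_bisim G.acyclic hopen hhom hL hRc hA hS hqnm ht1 ht2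
    exact ⟨t2, he ▸ ht1, ht2⟩
  · intro h
    refine ⟨?_, ⟨?_, ?_, ?_, ?_⟩, ?_⟩
    · -- OpenRel
      intro n m a b hn hm hnm
      obtain ⟨r, r', τ, hqr, hp, hp'⟩ := prop_to_paths hnm
      obtain ⟨t, ht, ht'⟩ := h r r' hqr
      obtain ⟨s, hs, hs'⟩ := common_readback ht ht' hp hp'
      have h1 := readback_fvar hs hp hn
      have h2 := readback_fvar hs' hp' hm
      rw [h1] at h2
      injection h2 with hab
      exact G.toPreLamGraph.fvar_inj n m a hn (by rw [hm, hab])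
    · -- Homogeneous
      intro n m hnm
      obtain ⟨r, r', τ, hqr, hp, hp'⟩ := prop_to_paths hnm
      obtain ⟨t, ht, ht'⟩ := h r r' hqr
      obtain ⟨s, hs, hs'⟩ := common_readback ht ht' hp hp'
      rw [readback_kind hs hp, readback_kind hs' hp']
    · exact fun n m n1 n2 m1 m2 h1 h2 hh => .appL hh h1 h2
    · exact fun n m n1 n2 m1 m2 h1 h2 hh => .appR hh h1 h2
    · exact fun n m n' m' h1 h2 hh => .abs hh h1 h2
    · -- ClosedScope
      intro n m l l' hn hm hnm
      obtain ⟨r, r', τ, hqr, hp, hp'⟩ := prop_to_paths hnm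
      obtain ⟨t, ht, ht'⟩ := h r r' hqr
      have hpar : ∀ (σ : List Dir) (p p' : Node), G.toPreLamGraph.Path σ r p →
          G.toPreLamGraph.Path σ r' p' →
          (G.toPreLamGraph.label p).kind = (G.toPreLamGraph.label p').kind := by
        intro σ p p' a b
        obtain ⟨s, hs, hs'⟩ := common_readback ht ht' a b
        rw [readback_kind hs a, readback_kind hs' b]
      obtain ⟨s, hs, hs'⟩ := common_readback ht ht' hp hp'
      obtain ⟨k, rfl, hidx⟩ := readback_bvar hs hp hn
      obtain ⟨k', he, hidx'⟩ := readback_bvar hs' hp' hm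
      injection he with hk
      subst hk
      obtain ⟨bl, hbl⟩ := G.toPreLamGraph.binder_abs _ _ hn
      obtain ⟨bl', hbl'⟩ := G.toPreLamGraph.binder_abs _ _ hm
      obtain ⟨σ, hσ1, hσ2⟩ := index_sync hpar hbl hbl' hidx hidx'
      exact prop_desc hσ1 hσ2 (.base hqr)
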